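/- arXiv:2111.14656 — 3 statements merged into one kernel-verified Lean document; each statement's English description precedes it below -/
import Mathlib

section
/- Let K be a field and V a nonzero finite-dimensional K-vector space with nilpotent endomorphism x. The map f : V → V ⊕ V given by f(v) = (v, 0) is a monomorphism from (V, x) to (V ⊕ V, y), where y(v, w) = (x(v) + w, x(w)), y is nilpotent, and f∘x = y∘f; moreover if char K = 0, this monomorphism does not split in Nil(V), i.e., there is no g : V ⊕ V → V with g∘f = 1_V and g∘y = x∘g. -/
/-- For a nonzero finite-dimensional vector space `V` over a field of characteristic
zero with nilpotent endomorphism `x`, the map `f : V → V ⊕ V`, `v ↦ (v, 0)` is a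
monomorphism `(V, x) → (V ⊕ V, y)` in `Nil(V)`, where `y (v, w) = (x v + w, x w)` is
nilpotent and `y ∘ f = f ∘ x`; moreover this monomorphism does not split: there is no
`g : V ⊕ V → V` with `g ∘ f = 1` and `g ∘ y = x ∘ g`. -/
theorem stmt6 {K V : Type*} [Field K] [CharZero K] [AddCommGroup V] [Module K V]
    [FiniteDimensional K V] [Nontrivial V] (x : V →ₗ[K] V) (hx : IsNilpotent x) :
    let f : V →ₗ[K] V × V := LinearMap.inl K V V
    let y : V × V →ₗ[K] V × V :=
      LinearMap.prod (x ∘ₗ LinearMap.fst K V V + LinearMap.snd K V V)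
        (x ∘ₗ LinearMap.snd K V V)
    Function.Injective f ∧ IsNilpotent y ∧ y ∘ₗ f = f ∘ₗ x ∧
      ¬ ∃ g : V × V →ₗ[K] V, g ∘ₗ f = LinearMap.id ∧ g ∘ₗ y = x ∘ₗ g := by
  intro f y
  refine ⟨?_, ?_, ?_, ?_⟩
  · intro a b h
    simpa [f] using congrArg Prod.fst h
  · -- y = X + S with X = diag(x,x), S = shift; they commute, both nilpotent
    set X : V × V →ₗ[K] V × V :=
      LinearMap.prod (x ∘ₗ LinearMap.fst K V V) (x ∘ₗ LinearMap.snd K V V) with hX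
    set S : V × V →ₗ[K] V × V :=
      LinearMap.prod (LinearMap.snd K V V) 0 with hS
    have hyXS : y = X + S := by
      apply LinearMap.ext; intro p
      simp [y, X, S, add_comm]
    have hcomm : Commute X S := by
      apply LinearMap.ext; intro p
      simp [X, S, Module.End.mul_apply]
    have hXnil : IsNilpotent X := by
      obtain ⟨n, hn⟩ := hx
      refine ⟨n, ?_⟩
      have key : ∀ m : ℕ, (X ^ m : V × V →ₗ[K] V × V) =
          LinearMap.prod ((x ^ m) ∘ₗ LinearMap.fst K V V)
            ((x ^ m) ∘ₗ LinearMap.snd K V V) := by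
        intro m
        induction m with
        | zero => apply LinearMap.ext; intro p; simp
        | succ m ih =>
          apply LinearMap.ext; intro p
          have : (X ^ (m + 1)) p = X ((X ^ m) p) := by
            rw [pow_succ', Module.End.mul_apply]
          simp [this, ih, X, pow_succ, Module.End.mul_apply]
      apply LinearMap.ext; intro p
      simp [key n, hn]
    have hSnil : IsNilpotent S := by
      refine ⟨2, ?_⟩
      apply LinearMap.ext; intro p
      simp [S, pow_succ, Module.End.mul_apply]
    rw [hyXS]
    exact hcomm.isNilpotent_add hXnil hSnil
  · apply LinearMap.ext; intro v
    simp [y, f]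
  · rintro ⟨g, hgf, hgy⟩
    -- z = g ∘ inr ; then x ∘ z - z ∘ x = id
    set z : V →ₗ[K] V := g ∘ₗ LinearMap.inr K V V with hz
    have key : ∀ w : V, x (z w) - z (x w) = w := by
      intro w
      have h1 := congrArg (fun h : V × V →ₗ[K] V => h (0, w)) hgy
      simp only [LinearMap.comp_apply] at h1
      -- y (0, w) = (w, x w)
      have hyw : y (0, w) = (w, x w) := by simp [y]
      rw [hyw] at h1
      have hsplit : g (w, x w) = g (w, 0) + g (0, x w) := by
        rw [← map_add]; simp
      have hgw : g (w, 0) = w := by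
        have := congrArg (fun h : V →ₗ[K] V => h w) hgf
        simpa [f] using this
      have hzxw : g (0, x w) = z (x w) := by simp [z]
      have hzw : g (0, w) = z w := by simp [z]
      rw [hsplit, hgw, hzxw] at h1
      rw [hzw] at h1
      -- h1 : w + z (x w) = x (z w)
      rw [← h1]; abel
    have heq : x ∘ₗ z - z ∘ₗ x = LinearMap.id := by
      apply LinearMap.ext; intro w
      simpa using key w
    have htr := congrArg (LinearMap.trace K V) heq
    rw [map_sub, show x ∘ₗ z = x * z from rfl, show z ∘ₗ x = z * x from rfl,
      LinearMap.trace_mul_comm, sub_self, LinearMap.trace_id] at htr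
    have : (0 : ℕ) = Module.finrank K V := by exact_mod_cast htr
    have hpos : 0 < Module.finrank K V := Module.finrank_pos
    omega
end

section
/- Let p, q be positive integers and J_n the n×n nilpotent Jordan block over a field K. The pq × pq matrix J_q^T ⊗ I_p − I_q ⊗ J_p has rank pq − min{p, q}. -/
open Matrix Kronecker

/-- The `n × n` nilpotent Jordan block (ones on the superdiagonal). -/
def jordanMatrix (K : Type*) [Field K] (n : ℕ) : Matrix (Fin n) (Fin n) K :=
  Matrix.of fun i j => if (i : ℕ) + 1 = (j : ℕ) then 1 else 0

namespace Stmt13Aux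

variable {K : Type*} [Field K]

lemma sum1 {q : ℕ} (i : Fin q) (f : Fin q → K) :
    (∑ k : Fin q, if (k:ℕ)+1 = (i:ℕ) then f k else 0) =
    if h : 0 < (i:ℕ) then f ⟨(i:ℕ)-1, by omega⟩ else 0 := by
  split
  · next h =>
    rw [Finset.sum_eq_single (⟨(i:ℕ)-1, by omega⟩ : Fin q)]
    · simp; omega
    · intro k _ hk; rw [if_neg]; intro hc; apply hk; apply Fin.ext; simp only [Fin.val_mk]; omega
    · simp
  · next h =>
    apply Finset.sum_eq_zero; intro k _; rw [if_neg]; omega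

lemma sum2 {p : ℕ} (j : Fin p) (f : Fin p → K) :
    (∑ l : Fin p, if (j:ℕ)+1 = (l:ℕ) then f l else 0) =
    if h : (j:ℕ)+1 < p then f ⟨(j:ℕ)+1, h⟩ else 0 := by
  split
  · next h =>
    rw [Finset.sum_eq_single (⟨(j:ℕ)+1, h⟩ : Fin p)]
    · simp
    · intro k _ hk; rw [if_neg]; intro hc; apply hk; apply Fin.ext; simp only [Fin.val_mk]; omega
    · simp
  · next h =>
    apply Finset.sum_eq_zero; intro l _; rw [if_neg]; omega

lemma mulVec_apply {p q : ℕ} (x : Fin q × Fin p → K) (i : Fin q) (j : Fin p) :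
    (((jordanMatrix K q)ᵀ ⊗ₖ (1 : Matrix (Fin p) (Fin p) K) -
      (1 : Matrix (Fin q) (Fin q) K) ⊗ₖ jordanMatrix K p).mulVec x) (i, j) =
    (if h : 0 < (i:ℕ) then x (⟨(i:ℕ)-1, by omega⟩, j) else 0) -
    (if h : (j:ℕ)+1 < p then x (i, ⟨(j:ℕ)+1, h⟩) else 0) := by
  have : (((jordanMatrix K q)ᵀ ⊗ₖ (1 : Matrix (Fin p) (Fin p) K) -
      (1 : Matrix (Fin q) (Fin q) K) ⊗ₖ jordanMatrix K p).mulVec x) (i, j) =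
    (∑ k : Fin q, if (k:ℕ)+1 = (i:ℕ) then x (k,j) else 0) -
    (∑ l : Fin p, if (j:ℕ)+1 = (l:ℕ) then x (i,l) else 0) := by
    simp only [Matrix.mulVec, dotProduct, Fintype.sum_prod_type, jordanMatrix,
      Matrix.sub_apply, Matrix.kroneckerMap_apply, Matrix.transpose_apply, Matrix.of_apply,
      Matrix.one_apply, sub_mul, ite_mul, one_mul, zero_mul, Finset.sum_sub_distrib]
    congr 1
    · apply Finset.sum_congr rfl; intro k _
      simp [Finset.sum_ite_eq]
    · rw [Finset.sum_comm]
      apply Finset.sum_congr rfl; intro l _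
      simp [Finset.sum_ite_eq, ite_and]
  rw [this, sum1, sum2]

section Ker

variable {p q : ℕ} {x : Fin q × Fin p → K}
  (hx : ∀ (i : Fin q) (j : Fin p),
    (if h : 0 < (i:ℕ) then x (⟨(i:ℕ)-1, by omega⟩, j) else 0) =
    (if h : (j:ℕ)+1 < p then x (i, ⟨(j:ℕ)+1, h⟩) else 0))

lemma xeq {a c : Fin q} {b d : Fin p} (h1 : (a:ℕ) = (c:ℕ)) (h2 : (b:ℕ) = (d:ℕ)) :
    x (a, b) = x (c, d) := by
  obtain rfl : a = c := Fin.ext h1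
  obtain rfl : b = d := Fin.ext h2
  rfl

include hx

lemma L1 : ∀ (t : ℕ) (i : Fin q) (j : Fin p) (hi : (i:ℕ)+t < q) (hj : (j:ℕ)+t < p),
    x (i, j) = x (⟨(i:ℕ)+t, hi⟩, ⟨(j:ℕ)+t, hj⟩) := by
  intro t
  induction t with
  | zero =>
    intro i j hi hj
    exact xeq (by simp) (by simp)
  | succ t ih =>
    intro i j hi hj
    rw [ih i j (by omega) (by omega)]
    have := hx ⟨(i:ℕ)+t+1, by omega⟩ ⟨(j:ℕ)+t, by omega⟩
    rw [dif_pos (by simp), dif_pos (by simp only [Fin.val_mk]; omega)] at this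
    refine (xeq ?_ ?_).trans (this.trans (xeq ?_ ?_)) <;> (simp only [Fin.val_mk]; try omega)

lemma L2 (j : Fin p) (hj : 1 ≤ (j:ℕ)) (hq : 0 < q) : x (⟨0, hq⟩, j) = 0 := by
  have := hx ⟨0, hq⟩ ⟨(j:ℕ)-1, by omega⟩
  rw [dif_neg (by simp), dif_pos (by simp only [Fin.val_mk]; omega)] at this
  refine (xeq ?_ ?_).trans this.symm <;> (simp only [Fin.val_mk]; try omega)

lemma L3 (i : Fin q) (hi : (i:ℕ) < q-1) (hp : 0 < p) : x (i, ⟨p-1, by omega⟩) = 0 := by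
  have := hx ⟨(i:ℕ)+1, by omega⟩ ⟨p-1, by omega⟩
  rw [dif_pos (by simp), dif_neg (by simp only [Fin.val_mk]; omega)] at this
  refine (xeq ?_ ?_).trans this <;> (simp only [Fin.val_mk]; try omega)

lemma rep (hp : 0 < p) (hq : 0 < q) (i : Fin q) (j : Fin p) :
    x (i, j) = if h : (j:ℕ) + (q-1-(i:ℕ)) < min p q
      then x (⟨q-1, by omega⟩, ⟨(j:ℕ) + (q-1-(i:ℕ)), by omega⟩) else 0 := by
  have hi1 : (i:ℕ) ≤ q - 1 := by omega
  split
  · next h =>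
    rw [L1 hx (q-1-(i:ℕ)) i j (by omega) (by omega)]
    refine xeq ?_ ?_ <;> (simp only [Fin.val_mk]; try omega)
  · next h =>
    by_cases hji : (i:ℕ) < (j:ℕ)
    · have e := L1 hx (i:ℕ) ⟨0, hq⟩ ⟨(j:ℕ)-(i:ℕ), by omega⟩ (by simp only [Fin.val_mk]; omega) (by simp only [Fin.val_mk]; omega)
      rw [L2 hx ⟨(j:ℕ)-(i:ℕ), by omega⟩ (by simp only [Fin.val_mk]; omega) hq] at e
      refine (xeq ?_ ?_).trans e.symm <;> (simp only [Fin.val_mk]; try omega)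
    · have hpd : p ≤ (j:ℕ) + (q-1-(i:ℕ)) := by omega
      have e := L1 hx (p-1-(j:ℕ)) i j (by omega) (by omega)
      have := L3 hx ⟨(i:ℕ)+(p-1-(j:ℕ)), by omega⟩ (by simp only [Fin.val_mk]; omega) hp
      rw [e]
      refine (xeq ?_ ?_).trans this <;> (simp only [Fin.val_mk]; try omega)

end Ker

variable (K) in
noncomputable def Emap (p q : ℕ) (hq : 0 < q) :
    (Fin q × Fin p → K) →ₗ[K] (Fin (min p q) → K) where
  toFun x := fun jm => x (⟨q-1, by omega⟩, ⟨(jm:ℕ), by have := jm.2; omega⟩)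
  map_add' _ _ := rfl
  map_smul' _ _ := rfl

variable (K) in
noncomputable def Fmap (p q : ℕ) :
    (Fin (min p q) → K) →ₗ[K] (Fin q × Fin p → K) where
  toFun c := fun y =>
    if h : ((y.2:ℕ) + (q-1-(y.1:ℕ))) < min p q then c ⟨_, h⟩ else 0
  map_add' a b := by
    funext y
    by_cases h : ((y.2:ℕ) + (q-1-(y.1:ℕ))) < min p q
    · simp only [Pi.add_apply, dif_pos h]
    · simp only [Pi.add_apply, dif_neg h, add_zero]
  map_smul' r a := by
    funext y
    by_cases h : ((y.2:ℕ) + (q-1-(y.1:ℕ))) < min p q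
    · simp only [Pi.smul_apply, RingHom.id_apply, dif_pos h]
    · simp only [Pi.smul_apply, RingHom.id_apply, dif_neg h, smul_zero]

lemma Fmap_mem_ker (p q : ℕ) (hp : 0 < p) (hq : 0 < q) (c : Fin (min p q) → K) :
    ((jordanMatrix K q)ᵀ ⊗ₖ (1 : Matrix (Fin p) (Fin p) K) -
      (1 : Matrix (Fin q) (Fin q) K) ⊗ₖ jordanMatrix K p).mulVec (Fmap K p q c) = 0 := by
  funext y
  obtain ⟨i, j⟩ := y
  rw [mulVec_apply]
  simp only [Pi.zero_apply]
  rw [sub_eq_zero]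
  show (if h : 0 < (i:ℕ) then Fmap K p q c (⟨(i:ℕ)-1, by omega⟩, j) else 0) = _
  simp only [Fmap, LinearMap.coe_mk, AddHom.coe_mk]
  by_cases hi : 0 < (i:ℕ) <;> by_cases hj : (j:ℕ)+1 < p
  · rw [dif_pos hi, dif_pos hj]
    have hidx : (j:ℕ) + (q-1-((i:ℕ)-1)) = ((j:ℕ)+1) + (q-1-(i:ℕ)) := by
      have := i.2; omega
    by_cases h : ((j:ℕ) + (q-1-((i:ℕ)-1))) < min p q
    · rw [dif_pos]
      swap
      · show (j:ℕ) + _ < _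
        try simp only [Fin.val_mk]
        omega
      rw [dif_pos]
      swap
      · show ((j:ℕ)+1) + _ < _
        try simp only [Fin.val_mk]
        omega
      congr 1
      apply Fin.ext
      simp only [Fin.val_mk]
      omega
    · rw [dif_neg, dif_neg]
      · show ¬ (((j:ℕ)+1) + (q-1-(i:ℕ)) < min p q); omega
      · show ¬ ((j:ℕ) + (q-1-((i:ℕ)-1)) < min p q); omega
  · rw [dif_pos hi, dif_neg hj, dif_neg]
    show ¬ ((j:ℕ) + (q-1-((i:ℕ)-1)) < min p q)
    have := i.2
    have h1 : min p q ≤ p := min_le_left _ _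
    omega
  · rw [dif_neg hi, dif_pos hj, eq_comm, dif_neg]
    show ¬ (((j:ℕ)+1) + (q-1-(i:ℕ)) < min p q)
    have h1 : min p q ≤ q := min_le_right _ _
    omega
  · rw [dif_neg hi, dif_neg hj]

end Stmt13Aux

open Stmt13Aux in
/-- The `pq × pq` matrix `J_qᵀ ⊗ I_p − I_q ⊗ J_p` has rank `pq − min{p, q}`. -/
theorem stmt13 {K : Type*} [Field K] (p q : ℕ) (hp : 0 < p) (hq : 0 < q) :
    ((jordanMatrix K q)ᵀ ⊗ₖ (1 : Matrix (Fin p) (Fin p) K) -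
      (1 : Matrix (Fin q) (Fin q) K) ⊗ₖ jordanMatrix K p).rank = p * q - min p q := by
  set M := ((jordanMatrix K q)ᵀ ⊗ₖ (1 : Matrix (Fin p) (Fin p) K) -
      (1 : Matrix (Fin q) (Fin q) K) ⊗ₖ jordanMatrix K p) with hM
  -- the kernel characterization
  have hker : ∀ x : Fin q × Fin p → K, x ∈ LinearMap.ker M.mulVecLin →
      ∀ (i : Fin q) (j : Fin p),
        (if h : 0 < (i:ℕ) then x (⟨(i:ℕ)-1, by omega⟩, j) else 0) =
        (if h : (j:ℕ)+1 < p then x (i, ⟨(j:ℕ)+1, h⟩) else 0) := by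
    intro x hx i j
    rw [LinearMap.mem_ker] at hx
    have h0 : (M.mulVec x) (i, j) = 0 := by
      rw [show M.mulVec x = 0 from hx]; rfl
    rw [Stmt13Aux.mulVec_apply] at h0
    exact sub_eq_zero.mp h0
  have hmem : ∀ c : Fin (min p q) → K, Fmap K p q c ∈ LinearMap.ker M.mulVecLin := by
    intro c
    rw [LinearMap.mem_ker]
    show M.mulVec _ = 0
    exact Fmap_mem_ker p q hp hq c
  -- the equivalence
  let f : (Fin (min p q) → K) →ₗ[K] LinearMap.ker M.mulVecLin :=
    (Fmap K p q).codRestrict _ hmem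
  let g : LinearMap.ker M.mulVecLin →ₗ[K] (Fin (min p q) → K) :=
    (Emap K p q hq).comp (LinearMap.ker M.mulVecLin).subtype
  have h1 : g.comp f = LinearMap.id := by
    apply LinearMap.ext
    intro c
    funext jm
    show Fmap K p q c (⟨q-1, by omega⟩, ⟨(jm:ℕ), by have := jm.2; omega⟩) = c jm
    simp only [Fmap, LinearMap.coe_mk, AddHom.coe_mk]
    rw [dif_pos]
    swap
    · show ((jm:ℕ) : ℕ) + (q-1-(q-1)) < min p q
      try simp only [Fin.val_mk]
      have := jm.2; omega
    congr 1
    apply Fin.ext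
    simp only [Fin.val_mk]
    omega
  have h2 : f.comp g = LinearMap.id := by
    apply LinearMap.ext
    intro xk
    apply Subtype.ext
    funext y
    obtain ⟨i, j⟩ := y
    have hx := hker xk.1 xk.2
    show Fmap K p q _ (i, j) = xk.1 (i, j)
    rw [rep hx hp hq i j]
    simp only [Fmap, Emap, LinearMap.coe_mk, AddHom.coe_mk, LinearMap.coe_comp,
      Function.comp_apply, Submodule.coe_subtype]
    by_cases h : ((j:ℕ) + (q-1-(i:ℕ))) < min p q
    · rw [dif_pos h, dif_pos h]
      rfl
    · rw [dif_neg h, dif_neg h]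
  let e : (Fin (min p q) → K) ≃ₗ[K] LinearMap.ker M.mulVecLin :=
    LinearEquiv.ofLinear f g h2 h1
  have hkdim : Module.finrank K (LinearMap.ker M.mulVecLin) = min p q := by
    rw [← e.finrank_eq, Module.finrank_pi, Fintype.card_fin]
  have hsum := LinearMap.finrank_range_add_finrank_ker M.mulVecLin
  have hcard : Module.finrank K (Fin q × Fin p → K) = p * q := by
    rw [Module.finrank_pi, Fintype.card_prod, Fintype.card_fin, Fintype.card_fin, Nat.mul_comm]
  rw [hcard, hkdim] at hsum
  have hmin : min p q ≤ p * q := le_trans (min_le_left _ _) (Nat.le_mul_of_pos_right p hq)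
  rw [Matrix.rank]
  omega
end

section
/- Let K be algebraically closed, x a nilpotent endomorphism of a finite-dimensional space X, and b an invertible endomorphism of a finite-dimensional space B of dimension d. Then the endomorphism x ⊗ b of X ⊗ B is conjugate to x ⊗ 1_B; consequently (X ⊗ B, x ⊗ b) ≅ ⊕_{i=1}^d (X, x) in Nil(V). -/
open TensorProduct


theorem aux_relCompl {K V : Type*} [DivisionRing K] [AddCommGroup V] [Module K V]
    {S T : Submodule K V} (h : S ≤ T) : ∃ C, C ≤ T ∧ S ⊓ C = ⊥ ∧ S ⊔ C = T := by
  obtain ⟨C', hC'⟩ := Submodule.exists_isCompl S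
  refine ⟨C' ⊓ T, inf_le_right, ?_, ?_⟩
  · rw [← inf_assoc, disjoint_iff.mp hC'.disjoint, bot_inf_eq]
  · rw [← sup_inf_assoc_of_le C' h, codisjoint_iff.mp hC'.codisjoint, top_inf_eq]

theorem aux_filtration {K X : Type*} [Field K] [AddCommGroup X] [Module K X]
    (x : X →ₗ[K] X) (n : ℕ) :
    ∃ W : ℕ → Submodule K X,
      (∀ k, W k ⊓ LinearMap.ker (x ^ (n - k)) = ⊥) ∧
      (∀ k, W k ⊔ LinearMap.ker (x ^ (n - k)) = LinearMap.ker (x ^ (n + 1 - k))) ∧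
      (∀ k, Submodule.map x (W k) ≤ W (k + 1)) := by
  classical
  set κ : ℕ → Submodule K X := fun m => LinearMap.ker (x ^ m) with hκ
  have hκ0 : κ 0 = ⊥ := by simp [hκ, Module.End.one_eq_id]
  have hκmono : ∀ {a b : ℕ}, a ≤ b → κ a ≤ κ b := by
    intro a b hab v hv
    have hb : b = (b - a) + a := by omega
    simp only [hκ, LinearMap.mem_ker] at hv ⊢
    rw [hb, pow_add, Module.End.mul_apply, hv, map_zero]
  -- step existence
  have key : ∀ (k : ℕ) (S : Submodule K X), ∃ S',
      (S ⊓ κ (n - k) = ⊥ ∧ S ⊔ κ (n - k) = κ (n + 1 - k)) →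
      (Submodule.map x S ≤ S' ∧ S' ⊓ κ (n - (k + 1)) = ⊥ ∧
        S' ⊔ κ (n - (k + 1)) = κ (n + 1 - (k + 1))) := by
    intro k S
    by_cases hinv : S ⊓ κ (n - k) = ⊥ ∧ S ⊔ κ (n - k) = κ (n + 1 - k)
    swap
    · exact ⟨⊥, fun h => absurd h hinv⟩
    obtain ⟨h1, h2⟩ := hinv
    have hSle : S ≤ κ (n + 1 - k) := le_sup_left.trans h2.le
    rcases le_or_gt n k with hk | hk
    · -- degenerate case
      have hn0 : n - k = 0 := by omega
      have hn1 : n - (k + 1) = 0 := by omega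
      have hn2 : n + 1 - (k + 1) = 0 := by omega
      refine ⟨⊥, fun _ => ⟨?_, by simp [hn1, hn2, hκ0], by simp [hn1, hn2, hκ0]⟩⟩
      have hS1 : S ≤ κ 1 := hSle.trans (hκmono (by omega))
      rintro _ ⟨v, hv, rfl⟩
      have := hS1 hv
      simp only [hκ, LinearMap.mem_ker, pow_one] at this
      simp [this]
    · -- main case
      set m := n - k - 1 with hm
      have hmk : n - k = m + 1 := by omega
      have hmk2 : n + 1 - k = m + 2 := by omega
      have hmk3 : n - (k + 1) = m := by omega
      have hmk4 : n + 1 - (k + 1) = m + 1 := by omega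
      rw [hmk] at h1 h2
      rw [hmk2] at h2 hSle
      set A := Submodule.map x S with hA
      have hA1 : A ≤ κ (m + 1) := by
        rintro _ ⟨v, hv, rfl⟩
        have := hSle hv
        simp only [hκ, LinearMap.mem_ker] at this ⊢
        rw [← Module.End.mul_apply, ← pow_succ]
        exact this
      have hA2 : A ⊓ κ m = ⊥ := by
        rw [eq_bot_iff]
        rintro v ⟨⟨s, hs, rfl⟩, hker⟩
        have hsk : s ∈ κ (m + 1) := by
          simp only [hκ, LinearMap.mem_ker] at hker ⊢
          rw [pow_succ, Module.End.mul_apply]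
          exact hker
        have : s ∈ S ⊓ κ (m + 1) := ⟨hs, hsk⟩
        rw [h1] at this
        simp only [Submodule.mem_bot] at this
        simp [this]
      obtain ⟨C, hC1, hC2, hC3⟩ :=
        aux_relCompl (show A ⊔ κ m ≤ κ (m + 1) from sup_le hA1 (hκmono (Nat.le_succ m)))
      refine ⟨A ⊔ C, fun _ => ⟨le_sup_left, ?_, ?_⟩⟩
      · rw [hmk3, eq_bot_iff]
        rintro v ⟨hv, hker⟩
        obtain ⟨a, ha, c, hc, rfl⟩ := Submodule.mem_sup.mp hv
        have hc' : c ∈ (A ⊔ κ m) ⊓ C := by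
          refine ⟨?_, hc⟩
          have : a + c - a ∈ A ⊔ κ m :=
            Submodule.sub_mem _ (le_sup_right (a := A) hker) (le_sup_left (b := κ m) ha)
          simpa using this
        rw [hC2] at hc'
        simp only [Submodule.mem_bot] at hc'
        subst hc'
        have : a ∈ A ⊓ κ m := ⟨ha, by simpa using hker⟩
        rw [hA2] at this
        simp only [Submodule.mem_bot] at this
        simp [this]
      · rw [hmk3, hmk4, sup_right_comm, hC3]
  -- base
  obtain ⟨W0, _, h0a, h0b⟩ := aux_relCompl (hκmono (Nat.le_succ n) : κ n ≤ κ (n + 1))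
  rw [inf_comm] at h0a
  rw [sup_comm] at h0b
  refine ⟨fun k => Nat.rec W0 (fun k' prev => (key k' prev).choose) k, ?_⟩
  set W : ℕ → Submodule K X := fun k => Nat.rec W0 (fun k' prev => (key k' prev).choose) k
    with hW
  have hWsucc : ∀ k, W (k + 1) = (key k (W k)).choose := fun k => rfl
  have hinv : ∀ k, W k ⊓ κ (n - k) = ⊥ ∧ W k ⊔ κ (n - k) = κ (n + 1 - k) := by
    intro k
    induction k with
    | zero => simpa using ⟨h0a, h0b⟩
    | succ k ih =>
      rw [hWsucc]
      exact ((key k (W k)).choose_spec ih).2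
  exact ⟨fun k => (hinv k).1, fun k => (hinv k).2, fun k => by
    rw [hWsucc]; exact ((key k (W k)).choose_spec (hinv k)).1⟩
theorem aux_conj {K X B : Type*} [Field K] [AddCommGroup X] [Module K X]
    [AddCommGroup B] [Module K B]
    (x : X →ₗ[K] X) (hx : IsNilpotent x) (b : B ≃ₗ[K] B) :
    ∃ g : (X ⊗[K] B) ≃ₗ[K] (X ⊗[K] B),
      g.toLinearMap ∘ₗ TensorProduct.map x b.toLinearMap =
        TensorProduct.map x LinearMap.id ∘ₗ g.toLinearMap := by
  classical
  obtain ⟨n, hn⟩ := hx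
  set κ : ℕ → Submodule K X := fun m => LinearMap.ker (x ^ m) with hκ
  have hκ0 : κ 0 = ⊥ := by simp [hκ, Module.End.one_eq_id]
  have hκ1 : κ 1 = LinearMap.ker x := by simp [hκ]
  have hκmono : ∀ {a c : ℕ}, a ≤ c → κ a ≤ κ c := by
    intro a c hac v hv
    have hb : c = (c - a) + a := by omega
    simp only [hκ, LinearMap.mem_ker] at hv ⊢
    rw [hb, pow_add, Module.End.mul_apply, hv, map_zero]
  have hκn : κ n = ⊤ := by simp [hκ, hn]
  obtain ⟨W, hWd, hWs, hWm⟩ := aux_filtration x n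
  have hWle : ∀ k, W k ≤ κ (n + 1 - k) := fun k => le_sup_left.trans (hWs k).le
  have hWn : W n ≤ LinearMap.ker x := by
    have := hWle n
    rw [show n + 1 - n = 1 from by omega, hκ1] at this
    exact this
  have hWbot : ∀ k, n + 1 ≤ k → W k = ⊥ := by
    intro k hk
    have := hWle k
    rw [show n + 1 - k = 0 from by omega, hκ0, le_bot_iff] at this
    exact this
  -- disjointness claim
  have hclaim : ∀ i, Disjoint (⨆ j, ⨆ (_ : j < i), W j) (κ (n + 1 - i)) := by
    intro i
    induction i with
    | zero => simp
    | succ i ih =>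
      have hsup : (⨆ j, ⨆ (_ : j < i + 1), W j) = (⨆ j, ⨆ (_ : j < i), W j) ⊔ W i := by
        apply le_antisymm
        · refine iSup₂_le fun j hj => ?_
          rcases Nat.lt_succ_iff_lt_or_eq.mp hj with h | h
          · exact le_sup_of_le_left (le_iSup₂ (f := fun (j : ℕ) (_ : j < i) => W j) j h)
          · subst h; exact le_sup_right
        · refine sup_le
            (iSup₂_le fun j hj => le_iSup₂ (f := fun (j : ℕ) (_ : j < i + 1) => W j) j (by omega))
            (le_iSup₂ (f := fun (j : ℕ) (_ : j < i + 1) => W j) i (by omega))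
      rw [hsup, Submodule.disjoint_def]
      intro v hv hker
      obtain ⟨a, ha, c, hc, rfl⟩ := Submodule.mem_sup.mp hv
      have hker' : a + c ∈ κ (n + 1 - i) := hκmono (by omega) hker
      have hc' : c ∈ κ (n + 1 - i) := hWle i hc
      have ha' : a ∈ κ (n + 1 - i) := by
        have : a + c - c ∈ κ (n + 1 - i) := Submodule.sub_mem _ hker' hc'
        simpa using this
      have ha0 : a = 0 := Submodule.disjoint_def.mp ih a ha ha'
      subst ha0
      have : c ∈ W i ⊓ κ (n - i) := ⟨hc, by simpa using hker⟩
      rw [hWd i] at this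
      simpa using this
  have hindep : iSupIndep W := by
    rw [iSupIndep_def]
    intro i
    have hle : (⨆ j, ⨆ (_ : j ≠ i), W j) ≤ (⨆ j, ⨆ (_ : j < i), W j) ⊔ κ (n - i) := by
      refine iSup₂_le fun j hj => ?_
      rcases lt_or_gt_of_ne hj with h | h
      · exact le_sup_of_le_left (le_iSup₂ (f := fun (j : ℕ) (_ : j < i) => W j) j h)
      · exact le_sup_of_le_right ((hWle j).trans (hκmono (by omega)))
    refine Disjoint.mono_right hle ?_
    rw [Submodule.disjoint_def]
    intro u hu huc
    obtain ⟨a, ha, c, hc, hac⟩ := Submodule.mem_sup.mp huc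
    have hu' : u ∈ κ (n + 1 - i) := hWle i hu
    have hc' : c ∈ κ (n + 1 - i) := hκmono (by omega) hc
    have ha' : a ∈ κ (n + 1 - i) := by
      have : u - c ∈ κ (n + 1 - i) := Submodule.sub_mem _ hu' hc'
      rw [← hac] at this
      simpa using this
    have ha0 : a = 0 := Submodule.disjoint_def.mp (hclaim i) a ha ha'
    have huc' : u = c := by rw [← hac, ha0, zero_add]
    have : u ∈ W i ⊓ κ (n - i) := ⟨hu, huc' ▸ hc⟩
    rw [hWd i] at this
    simpa using this
  have hsuptop : (⨆ k, W k) = ⊤ := by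
    have h2 : ∀ m, m ≤ n + 1 → κ m ≤ ⨆ k, W k := by
      intro m
      induction m with
      | zero => intro _; rw [hκ0]; exact bot_le
      | succ m ih =>
        intro hm
        have heq := hWs (n - m)
        rw [show n - (n - m) = m from by omega, show n + 1 - (n - m) = m + 1 from by omega]
          at heq
        have heq' : W (n - m) ⊔ κ m = κ (m + 1) := heq
        rw [← heq']
        exact sup_le (le_iSup W (n - m)) (ih (by omega))
    have := h2 n (by omega)
    rw [hκn] at this
    exact le_antisymm le_top this
  have hInternal : DirectSum.IsInternal W :=
    DirectSum.isInternal_submodule_of_iSupIndep_of_iSup_eq_top hindep hsuptop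
  letI : DirectSum.Decomposition W := hInternal.chooseDecomposition
  set π : ℕ → X →ₗ[K] X := fun k =>
    (W k).subtype ∘ₗ (DirectSum.component K ℕ (fun i => ↥(W i)) k) ∘ₗ
      (DirectSum.decomposeLinearEquiv W).toLinearMap with hπ
  have hπapp : ∀ k v, π k v = ↑(DirectSum.decompose W v k) := fun k v => rfl
  have hπmem : ∀ k v, π k v ∈ W k := fun k v => by rw [hπapp]; exact (DirectSum.decompose W v k).2
  have hπsame : ∀ k v, v ∈ W k → π k v = v := fun k v hv => by
    rw [hπapp]; exact DirectSum.decompose_of_mem_same W hv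
  have hπne : ∀ j k v, v ∈ W j → j ≠ k → π k v = 0 := fun j k v hv hjk => by
    rw [hπapp]; exact DirectSum.decompose_of_mem_ne W hv hjk
  have hπsum : ∀ v, (∑ k ∈ Finset.range (n + 1), π k v) = v := by
    intro v
    have hzero : ∀ k, k ∉ (DirectSum.decompose W v).support → π k v = 0 := by
      intro k hk
      rw [hπapp, DFinsupp.notMem_support_iff.mp hk]
      rfl
    have hsub : (DirectSum.decompose W v).support ⊆ Finset.range (n + 1) := by
      intro k hk
      rw [Finset.mem_range]
      by_contra h
      have hb := hWbot k (by omega)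
      apply DFinsupp.mem_support_iff.mp hk
      haveI : Subsingleton ↥(W k) := by rw [hb]; infer_instance
      exact Subsingleton.elim _ _
    calc (∑ k ∈ Finset.range (n + 1), π k v)
        = ∑ k ∈ (DirectSum.decompose W v).support, π k v :=
          (Finset.sum_subset hsub (fun k _ hk => hzero k hk)).symm
      _ = ∑ k ∈ (DirectSum.decompose W v).support, ↑(DirectSum.decompose W v k) := by
          simp only [hπapp]
      _ = v := DirectSum.sum_support_decompose W v
  have hπ0 : ∀ k, n + 1 ≤ k → π k = 0 := by
    intro k hk
    ext v
    have := hπmem k v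
    rw [hWbot k hk] at this
    simpa using this
  have hπx0 : ∀ v, π 0 (x v) = 0 := by
    intro v
    conv_lhs => rw [← hπsum v]
    rw [map_sum, map_sum]
    refine Finset.sum_eq_zero fun j _ => ?_
    exact hπne (j + 1) 0 _ (hWm j ⟨π j v, hπmem j v, rfl⟩) (by omega)
  have hπxsucc : ∀ k, k < n → ∀ v, π (k + 1) (x v) = x (π k v) := by
    intro k hk v
    conv_lhs => rw [← hπsum v]
    rw [map_sum, map_sum]
    rw [Finset.sum_eq_single_of_mem k (Finset.mem_range.mpr (by omega))]
    · exact hπsame _ _ (hWm k ⟨π k v, hπmem k v, rfl⟩)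
    · intro j _ hj
      exact hπne (j + 1) (k + 1) _ (hWm j ⟨π j v, hπmem j v, rfl⟩) (by omega)
  have hxπn : ∀ v, x (π n v) = 0 := fun v => LinearMap.mem_ker.mp (hWn (hπmem n v))
  -- units
  set U : (B →ₗ[K] B)ˣ :=
    ⟨b.toLinearMap, b.symm.toLinearMap,
      by ext w; simp [Module.End.mul_apply], by ext w; simp [Module.End.mul_apply]⟩ with hU
  set f : ℕ → (B →ₗ[K] B) := fun m => ((U ^ m : (B →ₗ[K] B)ˣ) : B →ₗ[K] B) with hf
  set f' : ℕ → (B →ₗ[K] B) := fun m => (((U ^ m)⁻¹ : (B →ₗ[K] B)ˣ) : B →ₗ[K] B) with hf'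
  have hf1 : ∀ m w, f m (f' m w) = w := by
    intro m w
    rw [hf, hf', ← Module.End.mul_apply, ← Units.val_mul, mul_inv_cancel, Units.val_one,
      Module.End.one_apply]
  have hfu : ∀ m w, f m (b.toLinearMap w) = f (m + 1) w := by
    intro m w
    have : b.toLinearMap = ((U : (B →ₗ[K] B)ˣ) : B →ₗ[K] B) := rfl
    rw [this, ← Module.End.mul_apply, ← Units.val_mul, ← pow_succ]
  set g₀ : (X ⊗[K] B) →ₗ[K] (X ⊗[K] B) :=
    ∑ k ∈ Finset.range (n + 1), TensorProduct.map (π k) (f (n - k)) with hg₀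
  set g₁ : (X ⊗[K] B) →ₗ[K] (X ⊗[K] B) :=
    ∑ k ∈ Finset.range (n + 1), TensorProduct.map (π k) (f' (n - k)) with hg₁
  have hg₀app : ∀ (a : X) (w : B),
      g₀ (a ⊗ₜ[K] w) = ∑ k ∈ Finset.range (n + 1), (π k a) ⊗ₜ[K] (f (n - k) w) := by
    intro a w
    rw [hg₀, LinearMap.sum_apply]
    exact Finset.sum_congr rfl fun k _ => rfl
  have hg₁app : ∀ (a : X) (w : B),
      g₁ (a ⊗ₜ[K] w) = ∑ k ∈ Finset.range (n + 1), (π k a) ⊗ₜ[K] (f' (n - k) w) := by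
    intro a w
    rw [hg₁, LinearMap.sum_apply]
    exact Finset.sum_congr rfl fun k _ => rfl
  have hcomp1 : g₀ ∘ₗ g₁ = LinearMap.id := by
    apply TensorProduct.ext'
    intro a w
    rw [LinearMap.comp_apply, LinearMap.id_apply, hg₁app, map_sum]
    have : ∀ k ∈ Finset.range (n + 1),
        g₀ ((π k a) ⊗ₜ[K] (f' (n - k) w)) = (π k a) ⊗ₜ[K] w := by
      intro k hk
      rw [hg₀app]
      rw [Finset.sum_eq_single_of_mem k hk]
      · rw [hπsame k _ (hπmem k a), hf1]
      · intro j _ hj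
        rw [hπne k j _ (hπmem k a) (Ne.symm hj), TensorProduct.zero_tmul]
    rw [Finset.sum_congr rfl this, ← TensorProduct.sum_tmul, hπsum]
  have hcomp2 : g₁ ∘ₗ g₀ = LinearMap.id := by
    apply TensorProduct.ext'
    intro a w
    rw [LinearMap.comp_apply, LinearMap.id_apply, hg₀app, map_sum]
    have : ∀ k ∈ Finset.range (n + 1),
        g₁ ((π k a) ⊗ₜ[K] (f (n - k) w)) = (π k a) ⊗ₜ[K] w := by
      intro k hk
      rw [hg₁app]
      rw [Finset.sum_eq_single_of_mem k hk]
      · rw [hπsame k _ (hπmem k a)]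
        congr 1
        rw [hf, hf', ← Module.End.mul_apply, ← Units.val_mul, inv_mul_cancel, Units.val_one,
          Module.End.one_apply]
      · intro j _ hj
        rw [hπne k j _ (hπmem k a) (Ne.symm hj), TensorProduct.zero_tmul]
    rw [Finset.sum_congr rfl this, ← TensorProduct.sum_tmul, hπsum]
  refine ⟨LinearEquiv.ofLinear g₀ g₁ hcomp1 hcomp2, ?_⟩
  have hcoe : (LinearEquiv.ofLinear g₀ g₁ hcomp1 hcomp2).toLinearMap = g₀ := rfl
  rw [hcoe]
  apply TensorProduct.ext'
  intro a w
  rw [LinearMap.comp_apply, LinearMap.comp_apply, TensorProduct.map_tmul, hg₀app, hg₀app,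
    map_sum]
  rw [Finset.sum_range_succ', Finset.sum_range_succ]
  have hlast : TensorProduct.map x LinearMap.id ((π n a) ⊗ₜ[K] (f (n - n) w)) = 0 := by
    rw [TensorProduct.map_tmul, hxπn, TensorProduct.zero_tmul]
  have hfirst : (π 0 (x a)) ⊗ₜ[K] (f (n - 0) (b.toLinearMap w)) = 0 := by
    rw [hπx0, TensorProduct.zero_tmul]
  rw [hlast, hfirst, add_zero, add_zero]
  refine Finset.sum_congr rfl fun k hk => ?_
  have hkn : k < n := Finset.mem_range.mp hk
  rw [TensorProduct.map_tmul, LinearMap.id_coe, id_eq, hπxsucc k hkn, hfu,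
    show n - (k + 1) + 1 = n - k from by omega]
/-- Over an algebraically closed field, if `x` is a nilpotent endomorphism of a
finite-dimensional space `X` and `b` an invertible endomorphism of a finite-dimensional
space `B` of dimension `d`, then `x ⊗ b` is conjugate to `x ⊗ 1_B`; consequently
`(X ⊗ B, x ⊗ b)` is isomorphic in `Nil(V)` to the `d`-fold direct sum `⊕_d (X, x)`. -/
theorem stmt19 {K X B : Type*} [Field K] [IsAlgClosed K]
    [AddCommGroup X] [Module K X] [FiniteDimensional K X]
    [AddCommGroup B] [Module K B] [FiniteDimensional K B]
    (x : X →ₗ[K] X) (hx : IsNilpotent x) (b : B ≃ₗ[K] B) (d : ℕ)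
    (hd : Module.finrank K B = d) :
    (∃ g : (X ⊗[K] B) ≃ₗ[K] (X ⊗[K] B),
      g.toLinearMap ∘ₗ TensorProduct.map x b.toLinearMap =
        TensorProduct.map x LinearMap.id ∘ₗ g.toLinearMap) ∧
    (∃ e : (X ⊗[K] B) ≃ₗ[K] (Fin d → X),
      ∀ (v : X ⊗[K] B) (i : Fin d),
        e (TensorProduct.map x b.toLinearMap v) i = x (e v i)) := by
  obtain ⟨g, hg⟩ := aux_conj x hx b
  refine ⟨⟨g, hg⟩, ?_⟩
  let β : Module.Basis (Fin d) K B := Module.finBasisOfFinrankEq K B hd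
  let φ : (X ⊗[K] B) ≃ₗ[K] (Fin d → X) :=
    (TensorProduct.congr (LinearEquiv.refl K X) β.equivFun).trans
      (TensorProduct.piScalarRight K K X (Fin d))
  have hφ : ∀ (v : X ⊗[K] B) (i : Fin d),
      φ (TensorProduct.map x LinearMap.id v) i = x (φ v i) := by
    intro v i
    induction v with
    | zero => simp
    | tmul a w =>
      simp [φ, TensorProduct.congr_tmul, TensorProduct.piScalarRightHom_tmul]
    | add v₁ v₂ ih₁ ih₂ =>
      simp only [map_add, Pi.add_apply, ih₁, ih₂]
  refine ⟨g.trans φ, fun v i => ?_⟩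
  have hgv : g (TensorProduct.map x b.toLinearMap v) =
      TensorProduct.map x LinearMap.id (g v) := by
    have := LinearMap.congr_fun hg v
    simpa using this
  simp only [LinearEquiv.trans_apply, hgv]
  exact hφ (g v) i
end
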